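/- arXiv:0910.1182 — 3 statements merged into one kernel-verified Lean document; each statement's English description precedes it below -/
import Mathlib

section
/- Let e ≥ 1 and d ≥ 1, and let P be the simplex in R^d with vertices v_0 = (−e,...,−e) and v_i = e_i for 1 ≤ i ≤ d. Then the δ-vector of P is (1, e, e, ..., e), i.e., δ_0 = 1 and δ_i = e for all 1 ≤ i ≤ d. -/
/-!
Write `D = d e + 1`. The dilate `nP` consists of the `y` with `t = n - ∑ y ≥ 0` and
`D y_k + e t ≥ 0`: these say that the coefficients `λ₀ = t / D` and `λ_{k+1} = y_k + e t / D`
of `y = ∑ λ_i v_i`, `∑ λ_i = n`, are nonnegative. Splitting these coefficients into integer and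
fractional parts writes every lattice point of the cone over `P` uniquely as a lattice point of
the half-open fundamental parallelepiped plus a nonnegative integer combination of the generators
`(v_i, 1)`. The parallelepiped has `D` lattice points: one at height `0` and `e` at each height
`h = 1, …, d`. Hence `∑ i(P,n) λ^n = (1 + e (λ + ⋯ + λ^d)) / (1 - λ)^(d+1)`, and the numerator
is the δ-vector.
-/

open scoped BigOperators Pointwise

noncomputable section

/-- The lattice points of a subset of `ℝ^N`. -/
def latticePoints {N : ℕ} (P : Set (Fin N → ℝ)) : Set (Fin N → ℤ) :=
  {x | (fun i => (x i : ℝ)) ∈ P}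

/-- The Ehrhart counting function `i(P,n) = |nP ∩ ℤ^N|`. -/
def ehrhart {N : ℕ} (P : Set (Fin N → ℝ)) (n : ℕ) : ℤ :=
  ((latticePoints ((n : ℝ) • P)).ncard : ℤ)

/-- The `i`-th entry of the Ehrhart δ-vector of a `d`-dimensional polytope,
i.e. the coefficient of `λ^i` in `(1-λ)^{d+1} · Σ_{n ≥ 0} i(P,n) λ^n`. -/
def deltaVec {N : ℕ} (P : Set (Fin N → ℝ)) (d i : ℕ) : ℤ :=
  ∑ j ∈ Finset.range (i + 1),
    (-1 : ℤ) ^ (i - j) * (Nat.choose (d + 1) (i - j)) * ehrhart P j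

/-- `P ⊆ ℝ^N` is an integral convex polytope of dimension `d`. -/
def IsIntegralPolytope {N : ℕ} (P : Set (Fin N → ℝ)) (d : ℕ) : Prop :=
  (∃ V : Finset (Fin N → ℤ),
      P = convexHull ℝ ((fun x => fun i => ((x i : ℤ) : ℝ)) '' (V : Set (Fin N → ℤ)))) ∧
    Module.finrank ℝ (affineSpan ℝ P).direction = d

open Finset

open PowerSeries in
theorem PowerSeries.coeff_one_sub_X_pow {R : Type*} [CommRing R] (m k : ℕ) :
    coeff k ((1 - X : PowerSeries R) ^ m) = (-1) ^ k * m.choose k := by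
  rw [sub_eq_add_neg, ← rescale_neg_one_X, ← map_one (rescale (-1 : R)), ← map_add, ← map_pow,
    coeff_rescale, ← binomialSeries_nat (R := ℤ), binomialSeries_coeff]
  simp [Ring.choose_natCast]

open PowerSeries in
theorem deltaVec_eq_coeff {N : ℕ} (P : Set (Fin N → ℝ)) (d i : ℕ) :
    deltaVec P d i = coeff i (PowerSeries.mk (ehrhart P) * (1 - X) ^ (d + 1)) := by
  rw [coeff_mul, Finset.Nat.sum_antidiagonal_eq_sum_range_succ_mk, deltaVec]
  refine sum_congr rfl fun j _ => ?_
  rw [coeff_mk, coeff_one_sub_X_pow]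
  ring

theorem Finset.Nat.card_antidiagonalTuple (k n : ℕ) :
    #(Nat.antidiagonalTuple k n) = (k + n - 1).choose n := by
  rw [← piAntidiag_univ_fin_eq_antidiagonalTuple, ← map_sym_eq_piAntidiag, card_map,
    sym_univ, card_univ, Sym.card_sym_eq_choose, Fintype.card_fin]

theorem mem_smul_convexHull_range_iff {ι E : Type*} [Fintype ι] [Nonempty ι] [AddCommGroup E]
    [Module ℝ E] (v : ι → E) {r : ℝ} (hr : 0 ≤ r) {x : E} :
    x ∈ r • convexHull ℝ (Set.range v) ↔
      ∃ w : ι → ℝ, (∀ i, 0 ≤ w i) ∧ ∑ i, w i = r ∧ ∑ i, w i • v i = x := by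
  classical
  have hull : convexHull ℝ (Set.range v) = Fintype.linearCombination ℝ v '' stdSimplex ℝ ι := by
    rw [← convexHull_basis_eq_stdSimplex, LinearMap.image_convexHull, ← Set.range_comp]
    congr 2
    ext i
    simp [Fintype.linearCombination_apply, ite_smul]
  have scaled : r • stdSimplex ℝ ι = {w | (∀ i, 0 ≤ w i) ∧ ∑ i, w i = r} := by
    ext w
    rcases hr.eq_or_lt with rfl | hr
    · rw [Set.zero_smul_set ⟨_, ite_eq_mem_stdSimplex ℝ (Classical.arbitrary ι)⟩,
        Set.mem_zero, Set.mem_ofPred_eq]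
      constructor
      · rintro rfl
        simp
      · rintro ⟨hw, hsum⟩
        ext i
        exact (sum_eq_zero_iff_of_nonneg fun i _ => hw i).mp hsum i (mem_univ i)
    · simp only [Set.mem_smul_set_iff_inv_smul_mem₀ hr.ne', stdSimplex, Pi.smul_apply,
        smul_eq_mul, ← mul_sum, Set.mem_ofPred_eq, inv_mul_eq_one₀ hr.ne', eq_comm (a := r),
        mul_nonneg_iff_of_pos_left (inv_pos.mpr hr)]
  rw [hull, ← image_smul_set, scaled]
  simp [Fintype.linearCombination_apply, and_assoc]

section

variable {d e : ℕ}

def simplexVertices (d e : ℕ) : Fin (d + 1) → Fin d → ℝ :=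
  Fin.cons (fun _ => -(e : ℝ)) fun i j => if j = i then 1 else 0

theorem eq_simplexVertices {v : Fin (d + 1) → Fin d → ℝ}
    (hv0 : v 0 = fun _ => -(e : ℝ))
    (hvi : ∀ i : Fin d, v i.succ = fun j => if j = i then 1 else 0) :
    v = simplexVertices d e :=
  funext fun i => Fin.cases hv0 hvi i

theorem sum_smul_simplexVertices_apply (w : Fin (d + 1) → ℝ) (k : Fin d) :
    (∑ i, w i • simplexVertices d e i) k = w k.succ - e * w 0 := by
  simp [Fin.sum_univ_succ, simplexVertices, sub_eq_neg_add, mul_comm]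

theorem mem_smul_convexHull_simplexVertices_iff {r : ℝ} (hr : 0 ≤ r)
    {y : Fin d → ℝ} :
    y ∈ r • convexHull ℝ (Set.range (simplexVertices d e)) ↔
      0 ≤ r - ∑ k, y k ∧ ∀ k, 0 ≤ ((d : ℝ) * e + 1) * y k + e * (r - ∑ k, y k) := by
  rw [mem_smul_convexHull_range_iff _ hr]
  constructor
  · rintro ⟨w, hw, hsum, rfl⟩
    simp only [sum_smul_simplexVertices_apply]
    have slack : r - ∑ k : Fin d, (w k.succ - e * w 0) = ((d : ℝ) * e + 1) * w 0 := by
      rw [← hsum, Fin.sum_univ_succ, sum_sub_distrib]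
      simp only [sum_const, card_univ, Fintype.card_fin, nsmul_eq_mul]
      ring
    have hD : (0 : ℝ) ≤ d * e + 1 := by positivity
    refine ⟨slack ▸ mul_nonneg hD (hw 0), fun k => ?_⟩
    rw [slack]
    linear_combination mul_nonneg hD (hw k.succ)
  · rintro ⟨ht, hy⟩
    set t := r - ∑ k, y k
    set D : ℝ := d * e + 1
    have hD : 0 < D := by positivity
    refine ⟨Fin.cons (t / D) fun k => (D * y k + e * t) / D, fun i => ?_, ?_, ?_⟩
    · refine Fin.cases (div_nonneg ht hD.le) (fun k => ?_) i
      exact div_nonneg (hy k) hD.le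
    · rw [Fin.sum_univ_succ]
      simp only [Fin.cons_zero, Fin.cons_succ, ← sum_div, sum_add_distrib, ← mul_sum, sum_const,
        card_univ, Fintype.card_fin, nsmul_eq_mul]
      field_simp
      simp only [t, D]
      ring
    · ext k
      rw [sum_smul_simplexVertices_apply]
      simp only [Fin.cons_zero, Fin.cons_succ]
      field_simp
      ring

def simplexLatticePoints (d e n : ℕ) : Set (Fin d → ℤ) :=
  {y | 0 ≤ (n : ℤ) - ∑ k, y k ∧ ∀ k, 0 ≤ ((d : ℤ) * e + 1) * y k + e * ((n : ℤ) - ∑ k, y k)}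

theorem latticePoints_smul_convexHull_simplexVertices (n : ℕ) :
    latticePoints ((n : ℝ) • convexHull ℝ (Set.range (simplexVertices d e))) =
      simplexLatticePoints d e n := by
  ext y
  simp only [latticePoints, simplexLatticePoints, Set.mem_ofPred_eq,
    mem_smul_convexHull_simplexVertices_iff (Nat.cast_nonneg n)]
  norm_cast

/-- `(h, m)` is the lattice point of the half-open fundamental parallelepiped of the cone over
`P` with index `j = h + d m`, i.e. with `λ₀ = j / (d e + 1)`: its height is `h`, and
`m = ⌊e j / (d e + 1)⌋`. -/
def boxPoints (d e : ℕ) : Finset (ℕ × ℕ) := insert (0, 0) (Icc 1 d ×ˢ range e)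

theorem snd_le_of_mem_boxPoints {p : ℕ × ℕ} (hp : p ∈ boxPoints d e) : p.2 ≤ e * p.1 := by
  simp only [boxPoints, mem_insert, mem_product, mem_Icc, mem_range] at hp
  rcases hp with rfl | ⟨⟨h1, -⟩, hm⟩
  · simp
  · nlinarith

theorem index_lt_of_mem_boxPoints {p : ℕ × ℕ} (hp : p ∈ boxPoints d e) :
    p.1 + d * p.2 < d * e + 1 := by
  simp only [boxPoints, mem_insert, mem_product, mem_Icc, mem_range] at hp
  rcases hp with rfl | ⟨⟨-, hd⟩, hm⟩
  · simp
  · nlinarith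

theorem mul_index_lt_of_mem_boxPoints {p : ℕ × ℕ} (hp : p ∈ boxPoints d e) :
    e * (p.1 + d * p.2) < (d * e + 1) * (p.2 + 1) := by
  simp only [boxPoints, mem_insert, mem_product, mem_Icc, mem_range] at hp
  rcases hp with rfl | ⟨⟨-, hd⟩, -⟩
  · simp
  · nlinarith

def boxPointOfIndex (d j : ℕ) : ℕ × ℕ :=
  if j = 0 then (0, 0) else ((j - 1) % d + 1, (j - 1) / d)

theorem boxPointOfIndex_index (j : ℕ) :
    (boxPointOfIndex d j).1 + d * (boxPointOfIndex d j).2 = j := by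
  unfold boxPointOfIndex
  split_ifs with hj
  · simp [hj]
  · have := Nat.mod_add_div (j - 1) d
    simp only
    omega

theorem boxPointOfIndex_mem {j : ℕ} (hj : j < d * e + 1) :
    boxPointOfIndex d j ∈ boxPoints d e := by
  unfold boxPointOfIndex boxPoints
  split_ifs with hj0
  · exact mem_insert_self _ _
  · have hd : 0 < d := Nat.pos_of_ne_zero (by rintro rfl; omega)
    refine mem_insert_of_mem (mem_product.mpr ⟨mem_Icc.mpr ⟨by omega, ?_⟩, mem_range.mpr ?_⟩)
    · have := Nat.mod_lt (j - 1) hd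
      simp only
      omega
    · exact Nat.div_lt_of_lt_mul (by omega)

theorem boxPointOfIndex_of_mem {p : ℕ × ℕ} (hp : p ∈ boxPoints d e) :
    boxPointOfIndex d (p.1 + d * p.2) = p := by
  simp only [boxPoints, mem_insert, mem_product, mem_Icc, mem_range] at hp
  rcases hp with rfl | ⟨⟨h1, hd⟩, -⟩
  · simp [boxPointOfIndex]
  · obtain ⟨h, m⟩ := p
    simp only at h1 hd ⊢
    have hsub : h + d * m - 1 = (h - 1) + d * m := by omega
    rw [boxPointOfIndex, if_neg (by omega), hsub, Nat.add_mul_mod_self_left,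
      Nat.add_mul_div_left _ _ (by omega), Nat.mod_eq_of_lt (by omega),
      Nat.div_eq_of_lt (by omega)]
    simp only [Prod.mk.injEq]
    omega

/-- `⟨(h, m), c⟩` stands for the parallelepiped point `(h, m)` plus `∑ c_i (v_i, 1)`, a lattice
point of the cone at height `n`. -/
def conePoints (d e n : ℕ) : Finset (Σ _ : ℕ × ℕ, Fin (d + 1) → ℕ) :=
  ((boxPoints d e).filter (·.1 ≤ n)).sigma fun p => Nat.antidiagonalTuple (d + 1) (n - p.1)

theorem mem_conePoints {n : ℕ} {q : Σ _ : ℕ × ℕ, Fin (d + 1) → ℕ} :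
    q ∈ conePoints d e n ↔ q.1 ∈ boxPoints d e ∧ q.1.1 + ∑ i, q.2 i = n := by
  simp only [conePoints, mem_sigma, mem_filter, Nat.mem_antidiagonalTuple]
  constructor
  · rintro ⟨⟨hp, hle⟩, hsum⟩
    exact ⟨hp, by omega⟩
  · rintro ⟨hp, hsum⟩
    exact ⟨⟨hp, by omega⟩, by omega⟩

theorem card_conePoints (n : ℕ) :
    #(conePoints d e n) =
      ∑ p ∈ boxPoints d e, if p.1 ≤ n then (d + (n - p.1)).choose d else 0 := by
  rw [conePoints, card_sigma, sum_filter]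
  refine sum_congr rfl fun p _ => ?_
  rw [Nat.card_antidiagonalTuple, add_right_comm, Nat.add_sub_cancel, Nat.choose_symm_add]

def coneToLattice (d e : ℕ) (q : Σ _ : ℕ × ℕ, Fin (d + 1) → ℕ) : Fin d → ℤ :=
  fun k => q.2 k.succ - q.1.2 - e * q.2 0

/-- With `t = n - ∑ y`, the entries of `c` are the integer parts of `λ₀ = t / (d e + 1)` and
`λ_{k+1} = y_k + e t / (d e + 1)`, and `t mod (d e + 1)` indexes their fractional parts. -/
def latticeToCone (d e n : ℕ) (y : Fin d → ℤ) : Σ _ : ℕ × ℕ, Fin (d + 1) → ℕ :=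
  let t := (n - ∑ k, y k).toNat
  let p := boxPointOfIndex d (t % (d * e + 1))
  ⟨p, Fin.cons (t / (d * e + 1)) fun k => (y k + p.2 + e * (t / (d * e + 1) : ℕ)).toNat⟩

theorem sub_sum_coneToLattice {n : ℕ} {q : Σ _ : ℕ × ℕ, Fin (d + 1) → ℕ}
    (hq : q.1.1 + ∑ i, q.2 i = n) :
    (n : ℤ) - ∑ k, coneToLattice d e q k =
      ((q.1.1 + d * q.1.2 : ℕ) : ℤ) + ((d : ℤ) * e + 1) * q.2 0 := by
  subst hq
  simp only [coneToLattice, Fin.sum_univ_succ, sum_sub_distrib, sum_const, card_univ,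
    Fintype.card_fin, nsmul_eq_mul]
  push_cast
  ring

theorem mapsTo_coneToLattice (n : ℕ) :
    Set.MapsTo (coneToLattice d e) (conePoints d e n) (simplexLatticePoints d e n) := by
  intro q hq
  obtain ⟨hp, hsum⟩ := mem_conePoints.mp hq
  have hm : (q.1.2 : ℤ) ≤ e * q.1.1 := by exact_mod_cast snd_le_of_mem_boxPoints hp
  refine ⟨by rw [sub_sum_coneToLattice hsum]; positivity, fun k => ?_⟩
  rw [sub_sum_coneToLattice hsum]
  simp only [coneToLattice]
  push_cast
  have hc : (0 : ℤ) ≤ ((d : ℤ) * e + 1) * q.2 k.succ := by positivity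
  linear_combination hc + hm

theorem latticeToCone_fst_mem (n : ℕ) (y : Fin d → ℤ) :
    (latticeToCone d e n y).1 ∈ boxPoints d e :=
  boxPointOfIndex_mem (Nat.mod_lt _ (by omega))

theorem index_add_mul_latticeToCone {n : ℕ} {y : Fin d → ℤ} (hy : 0 ≤ (n : ℤ) - ∑ k, y k) :
    (((latticeToCone d e n y).1.1 + d * (latticeToCone d e n y).1.2 : ℕ) : ℤ) +
      ((d : ℤ) * e + 1) * (latticeToCone d e n y).2 0 = n - ∑ k, y k := by
  simp only [latticeToCone, boxPointOfIndex_index, Fin.cons_zero]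
  set t := ((n : ℤ) - ∑ k, y k).toNat
  rw [← Int.toNat_of_nonneg hy]
  exact_mod_cast Nat.mod_add_div t (d * e + 1)

theorem coe_latticeToCone_snd_succ {n : ℕ} {y : Fin d → ℤ} (hy : y ∈ simplexLatticePoints d e n)
    (k : Fin d) :
    ((latticeToCone d e n y).2 k.succ : ℤ) =
      y k + (latticeToCone d e n y).1.2 + e * (latticeToCone d e n y).2 0 := by
  have hyk := hy.2 k
  rw [← index_add_mul_latticeToCone (e := e) hy.1] at hyk
  have hj := mul_index_lt_of_mem_boxPoints (latticeToCone_fst_mem (e := e) n y)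
  simp only [latticeToCone, Fin.cons_succ, Fin.cons_zero] at hyk hj ⊢
  refine Int.toNat_of_nonneg ?_
  generalize boxPointOfIndex d _ = p at *
  generalize _ / (d * e + 1) = c at *
  have hj : (e : ℤ) * (p.1 + d * p.2) + 1 ≤ ((d : ℤ) * e + 1) * (p.2 + 1) := by exact_mod_cast hj
  push_cast at hyk
  by_contra! hneg
  have := mul_le_mul_of_nonneg_left (show y k + p.2 + e * c + 1 ≤ 0 by omega)
    (by positivity : (0 : ℤ) ≤ d * e + 1)
  linarith

theorem mapsTo_latticeToCone (n : ℕ) :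
    Set.MapsTo (latticeToCone d e n) (simplexLatticePoints d e n) (conePoints d e n) := by
  intro y hy
  refine mem_conePoints.mpr ⟨latticeToCone_fst_mem n y, ?_⟩
  have hsum := Fin.sum_univ_succ fun i => ((latticeToCone d e n y).2 i : ℤ)
  simp only [coe_latticeToCone_snd_succ hy, sum_add_distrib, sum_const, card_univ,
    Fintype.card_fin, nsmul_eq_mul] at hsum
  have hidx := index_add_mul_latticeToCone (e := e) hy.1
  push_cast at hidx
  zify
  linarith

theorem leftInvOn_latticeToCone (n : ℕ) :
    Set.LeftInvOn (latticeToCone d e n) (coneToLattice d e) (conePoints d e n) := by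
  intro q hq
  obtain ⟨hp, hsum⟩ := mem_conePoints.mp hq
  have ht : ((n : ℤ) - ∑ k, coneToLattice d e q k).toNat =
      (q.1.1 + d * q.1.2) + (d * e + 1) * q.2 0 := by
    rw [sub_sum_coneToLattice hsum]
    exact_mod_cast Int.toNat_natCast _
  have hlt := index_lt_of_mem_boxPoints hp
  obtain ⟨⟨h, m⟩, c⟩ := q
  simp only [latticeToCone, ht, Nat.add_mul_mod_self_left, Nat.mod_eq_of_lt hlt,
    Nat.add_mul_div_left _ _ (by omega : 0 < d * e + 1), Nat.div_eq_of_lt hlt, zero_add,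
    boxPointOfIndex_of_mem hp]
  refine Sigma.ext rfl (heq_of_eq (funext fun i => Fin.cases rfl (fun k => ?_) i))
  simp only [Fin.cons_succ, coneToLattice]
  rw [show (c k.succ : ℤ) - m - e * c 0 + m + e * c 0 = c k.succ by ring, Int.toNat_natCast]

theorem rightInvOn_latticeToCone (n : ℕ) :
    Set.RightInvOn (latticeToCone d e n) (coneToLattice d e) (simplexLatticePoints d e n) := by
  intro y hy
  ext k
  rw [coneToLattice, coe_latticeToCone_snd_succ hy]
  ring

theorem ncard_simplexLatticePoints (n : ℕ) :
    (simplexLatticePoints d e n).ncard =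
      ∑ p ∈ boxPoints d e, if p.1 ≤ n then (d + (n - p.1)).choose d else 0 := by
  rw [← card_conePoints, ← Set.ncard_coe_finset]
  exact (Set.InvOn.bijOn ⟨leftInvOn_latticeToCone n, rightInvOn_latticeToCone n⟩
    (mapsTo_coneToLattice n) (mapsTo_latticeToCone n)).ncard_eq.symm

theorem ehrhart_convexHull_simplexVertices (n : ℕ) :
    ehrhart (convexHull ℝ (Set.range (simplexVertices d e))) n =
      ∑ p ∈ boxPoints d e, if p.1 ≤ n then ((d + (n - p.1)).choose d : ℤ) else 0 := by
  rw [ehrhart, latticePoints_smul_convexHull_simplexVertices, ncard_simplexLatticePoints]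
  push_cast
  rfl

open PowerSeries in
theorem mk_ehrhart_convexHull_simplexVertices :
    PowerSeries.mk (ehrhart (convexHull ℝ (Set.range (simplexVertices d e)))) =
      (∑ p ∈ boxPoints d e, X ^ p.1) * PowerSeries.mk fun n => ((d + n).choose d : ℤ) := by
  ext n
  simp only [coeff_mk, ehrhart_convexHull_simplexVertices, sum_mul, map_sum, coeff_X_pow_mul']

open PowerSeries in
theorem sum_boxPoints_X_pow :
    ∑ p ∈ boxPoints d e, (X : PowerSeries ℤ) ^ p.1 = 1 + e • ∑ h ∈ Icc 1 d, X ^ h := by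
  rw [boxPoints, sum_insert (by simp), sum_product, smul_sum]
  simp

open PowerSeries in
theorem deltaVec_convexHull_simplexVertices (i : ℕ) :
    deltaVec (convexHull ℝ (Set.range (simplexVertices d e))) d i =
      coeff i (1 + e • ∑ h ∈ Icc 1 d, X ^ h : PowerSeries ℤ) := by
  rw [deltaVec_eq_coeff, mk_ehrhart_convexHull_simplexVertices, mul_assoc,
    mk_add_choose_mul_one_sub_pow_eq_one, mul_one, sum_boxPoints_X_pow]

end

theorem stmt5_general (d e : ℕ)
    (v : Fin (d + 1) → Fin d → ℝ)
    (hv0 : v 0 = fun _ => -(e : ℝ))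
    (hvi : ∀ i : Fin d, v i.succ = fun j => if j = i then 1 else 0)
    (P : Set (Fin d → ℝ)) (hP : P = convexHull ℝ (Set.range v)) :
    deltaVec P d 0 = 1 ∧ ∀ i, 1 ≤ i → i ≤ d → deltaVec P d i = (e : ℤ) := by
  subst hP
  rw [eq_simplexVertices hv0 hvi]
  simp only [deltaVec_convexHull_simplexVertices, map_add, map_nsmul, map_sum,
    PowerSeries.coeff_one, PowerSeries.coeff_X_pow, sum_ite_eq, mem_Icc]
  refine ⟨by simp, fun i hi hid => ?_⟩
  simp [hid, Nat.one_le_iff_ne_zero.mp hi]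

theorem stmt5 (d e : ℕ) (hd : 1 ≤ d) (he : 1 ≤ e)
    (v : Fin (d + 1) → Fin d → ℝ)
    (hv0 : v 0 = fun _ => -(e : ℝ))
    (hvi : ∀ i : Fin d, v i.succ = fun j => if j = i then 1 else 0)
    (P : Set (Fin d → ℝ)) (hP : P = convexHull ℝ (Set.range v)) :
    deltaVec P d 0 = 1 ∧ ∀ i, 1 ≤ i → i ≤ d → deltaVec P d i = (e : ℤ) :=
  stmt5_general d e v hv0 hvi P hP
end
end

section
/- Let d = m + n with positive integers m, n, and for 1 ≤ i ≤ d let v_i ∈ {0,1}^d be the cyclic 0-1 vector with support {i, i+1, ..., i+m−1} (indices mod d). Then the determinant of the d×d circulant matrix with rows v_1,...,v_d equals ±m if gcd(m,n) = 1, and equals 0 if gcd(m,n) ≠ 1. -/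
/-!
Over `ℂ` the Vandermonde matrix of the powers of a primitive `d`-th root of unity `ζ`
diagonalises every circulant matrix, so the determinant is
`∏_{k<d} (1 + ζ^k + ⋯ + ζ^{k(m-1)})`. The factor `k = 0` is `m`. If `g = gcd(m, d)`, which
equals `gcd(m, n)`, exceeds `1`, the factor `k = d/g` vanishes, as `ζ^k` is a primitive `g`-th
root of unity and `g ∣ m`. If `gcd(m, d) = 1`, multiplying the other factors by
`∏_{0<k<d} (1 - ζ^k) = d` gives `∏_{0<k<d} (1 - (ζ^m)^k)`, which is again `d` because
`ζ^m` is primitive too; so those factors multiply to `1`.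
-/

open scoped BigOperators Pointwise

noncomputable section

open Finset Matrix

theorem pow_val_add_of_pow_eq_one {M : Type*} [Monoid M] {d : ℕ} {z : M} (hz : z ^ d = 1)
    (a b : Fin d) : z ^ ((a + b : Fin d) : ℕ) = z ^ (a : ℕ) * z ^ (b : ℕ) := by
  rw [Fin.val_add, ← pow_eq_pow_mod _ hz, pow_add]

theorem Fin.sum_univ_ite_val_lt {M : Type*} [AddCommMonoid M] {d m : ℕ} (hm : m ≤ d)
    (f : ℕ → M) :
    ∑ t : Fin d, (if (t : ℕ) < m then f t else 0) = ∑ t ∈ range m, f t := by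
  rw [Fin.sum_univ_eq_sum_range (fun t => if t < m then f t else 0), ← sum_filter]
  congr 1
  ext t
  simp only [mem_filter, mem_range]
  omega

namespace Matrix

variable {R : Type*} [CommRing R] {d : ℕ} [NeZero d] {ζ : R}

theorem transpose_circulant_mul_vandermonde (hζ : ζ ^ d = 1) (v : Fin d → R) :
    (circulant v)ᵀ * vandermonde (fun k : Fin d => ζ ^ (k : ℕ)) =
      vandermonde (fun k : Fin d => ζ ^ (k : ℕ)) *
        diagonal fun k : Fin d => ∑ t, v t * (ζ ^ (k : ℕ)) ^ (t : ℕ) := by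
  ext i k
  have hz : (ζ ^ (k : ℕ)) ^ d = 1 := by rw [← pow_mul, mul_comm, pow_mul, hζ, one_pow]
  rw [mul_diagonal, mul_apply, ← Equiv.sum_comp (Equiv.addRight i), mul_sum]
  refine sum_congr rfl fun t _ => ?_
  simp only [transpose_apply, circulant_apply, vandermonde_apply, Equiv.coe_addRight,
    add_sub_cancel_right, pow_right_comm ζ _ (k : ℕ), pow_val_add_of_pow_eq_one hz]
  ring

theorem det_circulant_eq_prod [IsDomain R] (hζ : IsPrimitiveRoot ζ d) (v : Fin d → R) :
    (circulant v).det = ∏ k : Fin d, ∑ t, v t * (ζ ^ (k : ℕ)) ^ (t : ℕ) := by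
  have hV : (vandermonde fun k : Fin d => ζ ^ (k : ℕ)).det ≠ 0 :=
    det_vandermonde_ne_zero_iff.mpr fun a b h => Fin.ext (hζ.pow_inj a.2 b.2 h)
  have h := congrArg det (transpose_circulant_mul_vandermonde hζ.pow_eq_one v)
  rw [det_mul, det_mul, det_transpose, det_diagonal, mul_comm] at h
  exact mul_left_cancel₀ hV h

theorem det_circulant_ite_val_lt [IsDomain R] (hζ : IsPrimitiveRoot ζ d) {m : ℕ}
    (hm : m ≤ d) :
    (circulant fun t : Fin d => if (t : ℕ) < m then (1 : R) else 0).det =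
      ∏ k ∈ range d, ∑ t ∈ range m, (ζ ^ k) ^ t := by
  simp only [det_circulant_eq_prod hζ, ite_mul, one_mul, zero_mul]
  rw [← Fin.prod_univ_eq_prod_range (fun k => ∑ t ∈ range m, (ζ ^ k) ^ t)]
  exact prod_congr rfl fun k _ => Fin.sum_univ_ite_val_lt hm _

end Matrix

namespace IsPrimitiveRoot

variable {R : Type*} [CommRing R] [IsDomain R]

theorem geom_sum_eq_zero_of_dvd {g m : ℕ} {μ : R} (hμ : IsPrimitiveRoot μ g) (hg : 1 < g)
    (hgm : g ∣ m) : ∑ t ∈ range m, μ ^ t = 0 :=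
  mul_right_cancel₀ (sub_ne_zero.2 (hμ.ne_one hg)) <| by
    rw [geom_sum_mul, (hμ.pow_eq_one_iff_dvd m).2 hgm, sub_self, zero_mul]

variable {d m : ℕ} {ζ : R}

theorem prod_geom_sum_pow_of_coprime (hζ : IsPrimitiveRoot ζ d) (hd : d ≠ 0)
    (hm : m.Coprime d) :
    ∏ k ∈ range d, ∑ t ∈ range m, (ζ ^ k) ^ t = m := by
  obtain ⟨d, rfl⟩ := Nat.exists_eq_succ_of_ne_zero hd
  have hne : ∏ k ∈ range d, (1 - ζ ^ (k + 1)) ≠ 0 :=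
    prod_ne_zero_iff.2 fun k hk => sub_ne_zero.2 fun h =>
      hζ.pow_ne_one_of_pos_of_lt k.succ_ne_zero (by simpa using hk) h.symm
  have hprod : (∏ k ∈ range d, (1 - ζ ^ (k + 1))) *
      ∏ k ∈ range d, ∑ t ∈ range m, (ζ ^ (k + 1)) ^ t =
        ∏ k ∈ range d, (1 - ζ ^ (k + 1)) := by
    rw [← prod_mul_distrib, hζ.prod_one_sub_pow_eq_order,
      ← (hζ.pow_of_coprime m hm).prod_one_sub_pow_eq_order]
    exact prod_congr rfl fun k _ => by rw [mul_neg_geom_sum, pow_right_comm]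
  rw [prod_range_succ', (mul_eq_left₀ hne).1 hprod]
  simp

theorem prod_geom_sum_pow_eq_zero (hζ : IsPrimitiveRoot ζ d) (hd : d ≠ 0) (hm : ¬m.Coprime d) :
    ∏ k ∈ range d, ∑ t ∈ range m, (ζ ^ k) ^ t = 0 := by
  set g := m.gcd d
  have hgd : g ∣ d := m.gcd_dvd_right d
  have hg : 1 < g := Nat.one_lt_iff_ne_zero_and_ne_one.2 ⟨Nat.gcd_ne_zero_right hd, hm⟩
  have hk : d / g ≠ 0 :=
    (Nat.div_pos (Nat.le_of_dvd (Nat.pos_of_ne_zero hd) hgd) (by omega)).ne'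
  refine prod_eq_zero (mem_range.2 (Nat.div_lt_self (by omega) hg)) ?_
  have hμ := hζ.pow_of_dvd hk (Nat.div_dvd_of_dvd hgd)
  rw [Nat.div_div_self hgd hd] at hμ
  exact hμ.geom_sum_eq_zero_of_dvd hg (m.gcd_dvd_left d)

end IsPrimitiveRoot

theorem stmt11_general (m n : ℕ) (hm : 0 < m) (d : ℕ) (hd : d = m + n)
    (M : Matrix (Fin d) (Fin d) ℤ)
    (hM : ∀ i j, M i j = if (j.val + d - i.val) % d < m then 1 else 0) :
    (Nat.gcd m n = 1 → (M.det = (m : ℤ) ∨ M.det = -(m : ℤ))) ∧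
      (Nat.gcd m n ≠ 1 → M.det = 0) := by
  have hd0 : d ≠ 0 := by omega
  have : NeZero d := ⟨hd0⟩
  obtain ⟨ζ, hζ⟩ : ∃ ζ : ℂ, IsPrimitiveRoot ζ d :=
    ⟨_, Complex.isPrimitiveRoot_exp d hd0⟩
  have hcirc : M.map (Int.cast : ℤ → ℂ) =
      (circulant fun t : Fin d => if (t : ℕ) < m then 1 else 0)ᵀ := by
    ext i j
    rw [map_apply, hM, transpose_apply, circulant_apply, Fin.val_sub,
      show (j : ℕ) + d - i = d - i + j by omega]
    push_cast
    rfl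
  have hdet : (M.det : ℂ) = ∏ k ∈ range d, ∑ t ∈ range m, (ζ ^ k) ^ t := by
    rw [Int.cast_det, hcirc, det_transpose, det_circulant_ite_val_lt hζ (by omega)]
  have hcop : m.Coprime d ↔ m.gcd n = 1 := by
    rw [hd, Nat.add_comm, Nat.coprime_add_self_right]
  refine ⟨fun h => Or.inl ?_, fun h => ?_⟩
  · exact_mod_cast hdet.trans (hζ.prod_geom_sum_pow_of_coprime hd0 (hcop.2 h))
  · exact_mod_cast hdet.trans (hζ.prod_geom_sum_pow_eq_zero hd0 (mt hcop.1 h))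

theorem stmt11 (m n : ℕ) (hm : 0 < m) (hn : 0 < n) (d : ℕ) (hd : d = m + n)
    (M : Matrix (Fin d) (Fin d) ℤ)
    (hM : ∀ i j, M i j = if (j.val + d - i.val) % d < m then 1 else 0) :
    (Nat.gcd m n = 1 → (M.det = (m : ℤ) ∨ M.det = -(m : ℤ))) ∧
      (Nat.gcd m n ≠ 1 → M.det = 0) :=
  stmt11_general m n hm d hd M hM
end
end

section
/- Suppose (δ_0,...,δ_d) is a (0,1)-sequence with δ_0 = 1 and exactly four entries equal to 1, at positions 0 < m_1 < m_2 < m_3 ≤ d. Set p_1 = m_1 − 1, p_2 = m_2 − m_1 − 1, p_3 = m_3 − m_2 − 1, p_4 = d − m_3. If the sequence is shifted symmetric (δ_{i+1} = δ_{d−i} for 0 ≤ i ≤ ⌊(d−1)/2⌋) and satisfies the Stanley inequalities, then p_1 = p_4, p_2 = p_3, p_1 ≥ p_2 ≥ 0, and 2p_1 + 2p_2 = d − 3. -/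
open scoped BigOperators Pointwise

noncomputable section

/-! The shifted symmetry `δ (d + 1 - j) = δ j` on `1 ≤ j ≤ d` forces the positions of the ones
to be symmetric about `(d + 1) / 2`, i.e. `m1 + m3 = d + 1` and `2 * m2 = d + 1`; this gives the two
equalities and the value of `d`. For `p2 ≤ p1`: if the gap `m3 - m2` exceeded `m1`, the Stanley
inequality at `i = m3 - m2 - 1` would compare `δ 0 + δ m1 = 2` on the left with the lone one `δ m3`
on the right. -/

theorem shiftedSymm_reflect {α : Type*} {δ : ℕ → α} {d j : ℕ}
    (hss : ∀ i ≤ (d - 1) / 2, δ (d - i) = δ (i + 1)) (hj1 : 1 ≤ j) (hjd : j ≤ d) :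
    δ (d + 1 - j) = δ j := by
  rcases le_or_gt (j - 1) ((d - 1) / 2) with h | h
  · simpa [show d - (j - 1) = d + 1 - j by omega, show j - 1 + 1 = j by omega] using hss _ h
  · simpa [show d - (d - j) = j by omega, show d - j + 1 = d + 1 - j by omega] using
      (hss (d - j) (by omega)).symm

theorem add_eq_of_shiftedSymm_of_four_ones {d m1 m2 m3 : ℕ} {δ : ℕ → ℕ} (h1 : 0 < m1)
    (h12 : m1 < m2) (h23 : m2 < m3) (h3d : m3 ≤ d)
    (hones : ∀ i, δ i = 1 ↔ i = 0 ∨ i = m1 ∨ i = m2 ∨ i = m3)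
    (hss : ∀ i ≤ (d - 1) / 2, δ (d - i) = δ (i + 1)) :
    m1 + m3 = d + 1 ∧ 2 * m2 = d + 1 := by
  have reflect : ∀ j, 1 ≤ j → j ≤ d → δ j = 1 →
      d + 1 - j = m1 ∨ d + 1 - j = m2 ∨ d + 1 - j = m3 := by
    intro j hj1 hjd hj
    have := (hones _).1 ((shiftedSymm_reflect hss hj1 hjd).trans hj)
    omega
  have r1 := reflect m1 h1 (by omega) ((hones m1).2 (by simp))
  have r2 := reflect m2 (by omega) (by omega) ((hones m2).2 (by simp))
  have r3 := reflect m3 (by omega) h3d ((hones m3).2 (by simp))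
  omega

theorem two_le_sum_range_of_eq_one {δ : ℕ → ℕ} {m i : ℕ} (hm0 : 0 < m) (hmi : m ≤ i)
    (hδ0 : δ 0 = 1) (hδm : δ m = 1) : 2 ≤ ∑ j ∈ Finset.range (i + 1), δ j := by
  have := Finset.add_le_sum (s := Finset.range (i + 1)) (f := δ) (fun _ _ => Nat.zero_le _)
    (by simp) (Finset.mem_range.2 (by omega)) hm0.ne
  omega

theorem sum_range_sub_eq_of_eq_zero {δ : ℕ → ℕ} {n i : ℕ}
    (hgap : ∀ j, 0 < j → j ≤ i → δ (n - j) = 0) :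
    ∑ j ∈ Finset.range (i + 1), δ (n - j) = δ n := by
  rw [Finset.sum_range_succ', Finset.sum_eq_zero fun j hj => hgap (j + 1) j.succ_pos
    (Finset.mem_range.1 hj), zero_add, Nat.sub_zero]

theorem stmt16 (d m1 m2 m3 : ℕ) (h1 : 0 < m1) (h12 : m1 < m2) (h23 : m2 < m3)
    (h3d : m3 ≤ d) (δ : ℕ → ℕ) (h01 : ∀ i, δ i ≤ 1)
    (hones : ∀ i, δ i = 1 ↔ i = 0 ∨ i = m1 ∨ i = m2 ∨ i = m3)
    (hss : ∀ i ≤ (d - 1) / 2, δ (d - i) = δ (i + 1))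
    (hstanley : ∀ i ≤ m3 / 2,
      ∑ j ∈ Finset.range (i + 1), δ j ≤ ∑ j ∈ Finset.range (i + 1), δ (m3 - j)) :
    m1 - 1 = d - m3 ∧ m2 - m1 - 1 = m3 - m2 - 1 ∧ m2 - m1 - 1 ≤ m1 - 1 ∧
      2 * (m1 - 1) + 2 * (m2 - m1 - 1) = d - 3 := by
  obtain ⟨h13, h2⟩ := add_eq_of_shiftedSymm_of_four_ones h1 h12 h23 h3d hones hss
  have hgap : m3 - m2 ≤ m1 := by
    by_contra! hlt
    have hstan := hstanley (m3 - m2 - 1) (by omega)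
    rw [sum_range_sub_eq_of_eq_zero fun j hj0 hji => ?_, (hones m3).2 (by simp)] at hstan
    · have := two_le_sum_range_of_eq_one (δ := δ) h1 (by omega : m1 ≤ m3 - m2 - 1)
        ((hones 0).2 (by simp)) ((hones m1).2 (by simp))
      omega
    · have := h01 (m3 - j)
      have := (hones (m3 - j)).not.2 (by omega)
      omega
  omega
end
end
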